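/- For every natural number m ≥ 1, Rubinstein's function f : {0,1}^{4m²} → {0,1}, defined by f(x_{1,1},…,x_{2m,2m}) = ⋁_{i=1}^{2m} g(x_{i,1},…,x_{i,2m}) where g : {0,1}^{2m} → {0,1} satisfies g(y) = 1 iff there exists j ∈ [m] with y_{2j-1} = y_{2j} = 1 and y_k = 0 for all k ∉ {2j−1,2j}, has block sensitivity bs(f) = 2m². Consequently bs(f) = (1/2)·s(f)² for this f. -/

import Mathlib

section Defs

variable {ι : Type} [Fintype ι] [DecidableEq ι]

/-- `flipBit x i` is `x` with its `i`-th bit flipped. -/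
def flipBit (x : ι → Bool) (i : ι) : ι → Bool :=
  Function.update x i (!x i)

/-- `flipBlock x B` is `x` with all bits indexed by `B` flipped. -/
def flipBlock (x : ι → Bool) (B : Finset ι) : ι → Bool :=
  fun j => if j ∈ B then !x j else x j

/-- The sensitivity of `f` at `x`: the number of `i` with `f (x^(i)) ≠ f x`. -/
def sensAt (f : (ι → Bool) → Bool) (x : ι → Bool) : ℕ :=
  (Finset.univ.filter fun i => f (flipBit x i) ≠ f x).card

/-- The sensitivity `s(f) = max_x s(f,x)`. -/
def sens (f : (ι → Bool) → Bool) : ℕ :=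
  Finset.univ.sup (sensAt f)

/-- The 0-sensitivity `s₀(f) = max_{x : f x = 0} s(f,x)`. -/
def sens0 (f : (ι → Bool) → Bool) : ℕ :=
  (Finset.univ.filter fun x => f x = false).sup (sensAt f)

/-- The 1-sensitivity `s₁(f) = max_{x : f x = 1} s(f,x)`. -/
def sens1 (f : (ι → Bool) → Bool) : ℕ :=
  (Finset.univ.filter fun x => f x = true).sup (sensAt f)

/-- The block sensitivity of `f` at `x`: the largest `b` such that there are
`b` pairwise disjoint blocks on which flipping `x` changes the value of `f`. -/
noncomputable def bsAt (f : (ι → Bool) → Bool) (x : ι → Bool) : ℕ :=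
  sSup {b : ℕ | ∃ Bl : Fin b → Finset ι,
    (Pairwise fun p q => Disjoint (Bl p) (Bl q)) ∧
    ∀ p, f (flipBlock x (Bl p)) ≠ f x}

/-- The block sensitivity `bs(f) = max_x bs(f,x)`. -/
noncomputable def bs (f : (ι → Bool) → Bool) : ℕ :=
  Finset.univ.sup (bsAt f)

/-- The 0-block-sensitivity `bs₀(f) = max_{x : f x = 0} bs(f,x)`. -/
noncomputable def bs0 (f : (ι → Bool) → Bool) : ℕ :=
  (Finset.univ.filter fun x => f x = false).sup (bsAt f)

/-!
View `f` as the OR of `g` over the rows of a `2m × 2m` array, `g` being the indicator of the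
`m` patterns `P j` (ones exactly at `2j, 2j+1`). At a `1`-input every sensitive block meets the
row holding a pattern, so there are at most `2m` disjoint ones. At a `0`-input every sensitive
block turns some row `i` into some pattern `j`, hence contains the nonempty set of cells where
row `i` disagrees with `P j`; disjoint blocks thus get distinct labels `(i, j)`, at most `2m²`.
The all-zero input attains `2m²` with the blocks `{i} × supp (P j)`.

For sensitivity, the patterns form a code of minimum distance `3`: a word is adjacent to at most
one pattern, so a `0`-input has at most one sensitive bit per row, while an input with a single
pattern row and zeros elsewhere is sensitive on all `2m` bits of that row.
-/

open Finset

section BlockSensitivity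

lemma card_le_of_forall_exists_subset {ι α : Type} [Fintype α] {b : ℕ} {Bl : Fin b → Finset ι}
    (hdisj : Pairwise fun p q => Disjoint (Bl p) (Bl q)) (W : α → Finset ι)
    (hW : ∀ a, (W a).Nonempty) (h : ∀ p, ∃ a, W a ⊆ Bl p) : b ≤ Fintype.card α := by
  choose a ha using h
  have ha_inj : Function.Injective a := by
    intro p q hpq
    by_contra hne
    obtain ⟨i, hi⟩ := hW (a p)
    exact disjoint_left.mp (hdisj hne) (ha p hi) (ha q (hpq ▸ hi))
  simpa using Fintype.card_le_of_injective a ha_inj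

variable {ι : Type} [DecidableEq ι]

@[simp] lemma flipBlock_empty (x : ι → Bool) : flipBlock x ∅ = x := by
  funext j
  simp [flipBlock]

lemma flipBlock_singleton (x : ι → Bool) (i : ι) : flipBlock x {i} = flipBit x i := by
  funext j
  by_cases h : j = i <;> simp [flipBlock, flipBit, h]

lemma nonempty_of_flipBlock_ne {f : (ι → Bool) → Bool} {x : ι → Bool} {B : Finset ι}
    (hB : f (flipBlock x B) ≠ f x) : B.Nonempty :=
  nonempty_iff_ne_empty.2 fun h => hB (by rw [h, flipBlock_empty])

lemma bsAt_le_of_forall_exists_subset {f : (ι → Bool) → Bool} {x : ι → Bool} {α : Type}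
    [Fintype α] (W : α → Finset ι) (hW : ∀ a, (W a).Nonempty)
    (h : ∀ B, f (flipBlock x B) ≠ f x → ∃ a, W a ⊆ B) : bsAt f x ≤ Fintype.card α :=
  csSup_le' fun _ ⟨_, hdisj, hs⟩ => card_le_of_forall_exists_subset hdisj W hW fun p => h _ (hs p)

variable [Fintype ι]

lemma le_bsAt_of_pairwise_disjoint {f : (ι → Bool) → Bool} {x : ι → Bool} {α : Type} [Fintype α]
    (Bl : α → Finset ι) (hdisj : Pairwise fun a a' => Disjoint (Bl a) (Bl a'))
    (hs : ∀ a, f (flipBlock x (Bl a)) ≠ f x) : Fintype.card α ≤ bsAt f x := by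
  let e := (Fintype.equivFin α).symm
  refine le_csSup ⟨Fintype.card ι, fun b ⟨Bl', hdisj', hs'⟩ => ?_⟩
    ⟨Bl ∘ e, fun p q hpq => hdisj (e.injective.ne hpq), fun p => hs (e p)⟩
  exact card_le_of_forall_exists_subset hdisj' (fun i => {i}) (fun i => singleton_nonempty i)
    fun p => (nonempty_of_flipBlock_ne (hs' p)).imp fun _ => singleton_subset_iff.2

lemma sensAt_le_bsAt (f : (ι → Bool) → Bool) (x : ι → Bool) : sensAt f x ≤ bsAt f x := by
  have h := le_bsAt_of_pairwise_disjoint (f := f) (x := x)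
    (fun i : {i // i ∈ univ.filter fun i => f (flipBit x i) ≠ f x} => {i.1})
    (fun a a' h => disjoint_singleton.2 (Subtype.coe_injective.ne h))
    (fun a => by rw [flipBlock_singleton]; exact (mem_filter.1 a.2).2)
  rwa [Fintype.card_coe] at h

lemma hammingDist_flipBit (y : ι → Bool) (k : ι) : hammingDist y (flipBit y k) = 1 := by
  rw [hammingDist, card_eq_one]
  refine ⟨k, eq_singleton_iff_unique_mem.2 ⟨mem_filter.2 ⟨mem_univ k, by simp [flipBit]⟩, ?_⟩⟩
  intro i hi
  by_contra h
  exact (mem_filter.1 hi).2 (by simp [flipBit, Function.update_of_ne h])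

lemma flipBit_ne_of_three_le_hammingDist {J : Type} {P : J → ι → Bool}
    (hP : Pairwise fun j j' => 3 ≤ hammingDist (P j) (P j')) (j j' : J) (k : ι) :
    flipBit (P j) k ≠ P j' := by
  intro h
  have h1 : hammingDist (P j) (P j') = 1 := h ▸ hammingDist_flipBit _ _
  rcases eq_or_ne j j' with rfl | hne
  · simp at h1
  · have := hP hne
    omega

lemma eq_of_flipBit_eq_of_flipBit_eq {J : Type} {P : J → ι → Bool}
    (hP : Pairwise fun j j' => 3 ≤ hammingDist (P j) (P j')) {y : ι → Bool} {k k' : ι}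
    {j j' : J} (h : flipBit y k = P j) (h' : flipBit y k' = P j') : k = k' := by
  obtain rfl : j = j' := by
    by_contra hne
    have h2 : hammingDist (P j) (P j') ≤ 2 := by
      rw [← h, ← h']
      calc _ ≤ hammingDist (flipBit y k) y + hammingDist y (flipBit y k') :=
            hammingDist_triangle _ _ _
        _ = 2 := by rw [hammingDist_comm, hammingDist_flipBit, hammingDist_flipBit]
    exact absurd (hP hne) (by omega)
  by_contra hne
  have := congrFun (h.trans h'.symm) k
  simp [flipBit, hne] at this

end BlockSensitivity

section OrOfRows

variable {R C J : Type} [DecidableEq R] [DecidableEq C]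
  {f : (R × C → Bool) → Bool} {g : (C → Bool) → Bool} {P : J → C → Bool}

def IsOrOfRows (f : (R × C → Bool) → Bool) (g : (C → Bool) → Bool) : Prop :=
  ∀ x, f x = true ↔ ∃ i, g (fun k => x (i, k)) = true

lemma row_flipBlock_of_forall_notMem (x : R × C → Bool) {B : Finset (R × C)} {i : R}
    (h : ∀ k, (i, k) ∉ B) : (fun k => flipBlock x B (i, k)) = fun k => x (i, k) :=
  funext fun k => if_neg (h k)

lemma row_flipBit_self (x : R × C → Bool) (i : R) (k : C) :
    (fun c => flipBit x (i, k) (i, c)) = flipBit (fun c => x (i, c)) k := by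
  funext c
  by_cases h : c = k <;> simp [flipBit, h]

lemma row_flipBit_of_ne (x : R × C → Bool) {i i' : R} (k : C) (h : i' ≠ i) :
    (fun c => flipBit x (i, k) (i', c)) = fun c => x (i', c) := by
  funext c
  simp [flipBit, h]

lemma exists_flipBit_row_eq_of_false (hf : IsOrOfRows f g) (hg : ∀ y, g y = true ↔ ∃ j, y = P j)
    {x : R × C → Bool} (hx : f x = false) {i : R} {k : C} (h : f (flipBit x (i, k)) ≠ f x) :
    ∃ j, flipBit (fun c => x (i, c)) k = P j := by
  obtain ⟨i', hi'⟩ := (hf _).1 (by simpa [hx] using h)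
  obtain ⟨j, hj⟩ := (hg _).1 hi'
  obtain rfl : i' = i := by
    by_contra hne
    rw [row_flipBit_of_ne x k hne] at hi'
    simp [(hf x).2 ⟨i', hi'⟩] at hx
  exact ⟨j, (row_flipBit_self x i' k).symm.trans hj⟩

variable [Fintype C]

lemma bsAt_le_card_of_true (hf : IsOrOfRows f g) {x : R × C → Bool} (hx : f x = true) :
    bsAt f x ≤ Fintype.card C := by
  obtain ⟨i, hi⟩ := (hf x).1 hx
  refine bsAt_le_of_forall_exists_subset (fun k => {(i, k)}) (fun _ => singleton_nonempty _)
    fun B hB => ?_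
  by_contra! h
  refine hB (hx ▸ (hf _).2 ⟨i, ?_⟩)
  rwa [row_flipBlock_of_forall_notMem x fun k => by simpa using h k]

variable [Fintype R]

lemma sensAt_le_card_of_false (hf : IsOrOfRows f g) (hg : ∀ y, g y = true ↔ ∃ j, y = P j)
    (hP : Pairwise fun j j' => 3 ≤ hammingDist (P j) (P j')) {x : R × C → Bool}
    (hx : f x = false) : sensAt f x ≤ Fintype.card R := by
  refine (card_le_card_of_injOn Prod.fst (fun _ _ => mem_univ _) ?_).trans_eq card_univ
  rintro ⟨i, k⟩ hk ⟨i', k'⟩ hk' (rfl : i = i')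
  obtain ⟨j, hj⟩ := exists_flipBit_row_eq_of_false hf hg hx (mem_filter.1 hk).2
  obtain ⟨j', hj'⟩ := exists_flipBit_row_eq_of_false hf hg hx (mem_filter.1 hk').2
  rw [eq_of_flipBit_eq_of_flipBit_eq hP hj hj']

lemma card_le_sensAt_of_row_eq (hf : IsOrOfRows f g) (hg : ∀ y, g y = true ↔ ∃ j, y = P j)
    (hP : Pairwise fun j j' => 3 ≤ hammingDist (P j) (P j')) (hP0 : ∀ j, ∃ k, P j k = true)
    (i : R) (j : J) : Fintype.card C ≤ sensAt f fun c => if c.1 = i then P j c.2 else false := by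
  set x : R × C → Bool := fun c => if c.1 = i then P j c.2 else false
  have hx : f x = true := (hf x).2 ⟨i, (hg _).2 ⟨j, funext fun k => by simp [x]⟩⟩
  have hflip : ∀ k, f (flipBit x (i, k)) = false := by
    intro k
    rw [Bool.eq_false_iff]
    intro h
    obtain ⟨i', hi'⟩ := (hf _).1 h
    obtain ⟨j', hj'⟩ := (hg _).1 hi'
    rcases eq_or_ne i' i with rfl | hne
    · rw [row_flipBit_self] at hj'
      exact flipBit_ne_of_three_le_hammingDist hP j j' k (by simpa [x] using hj')
    · rw [row_flipBit_of_ne x k hne] at hj'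
      obtain ⟨c, hc⟩ := hP0 j'
      simpa [x, hne, hc] using congrFun hj' c
  rw [← card_univ]
  exact card_le_card_of_injOn (fun k => (i, k))
    (fun k _ => mem_filter.2 ⟨mem_univ _, by simp [hx, hflip]⟩) fun k _ k' _ h => (Prod.mk.inj h).2

theorem sens_eq_card [Nonempty R] [Nonempty J] (hf : IsOrOfRows f g)
    (hg : ∀ y, g y = true ↔ ∃ j, y = P j)
    (hP : Pairwise fun j j' => 3 ≤ hammingDist (P j) (P j')) (hP0 : ∀ j, ∃ k, P j k = true)
    (hR : Fintype.card R ≤ Fintype.card C) : sens f = Fintype.card C := by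
  refine le_antisymm (Finset.sup_le fun x _ => ?_) ((card_le_sensAt_of_row_eq hf hg hP hP0
    (Classical.arbitrary R) (Classical.arbitrary J)).trans (le_sup (mem_univ _)))
  cases hx : f x
  · exact (sensAt_le_card_of_false hf hg hP hx).trans hR
  · exact (sensAt_le_bsAt f x).trans (bsAt_le_card_of_true hf hx)

variable [Fintype J]

lemma bsAt_le_card_mul_card_of_false (hf : IsOrOfRows f g) (hg : ∀ y, g y = true ↔ ∃ j, y = P j)
    {x : R × C → Bool} (hx : f x = false) : bsAt f x ≤ Fintype.card R * Fintype.card J := by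
  rw [← Fintype.card_prod]
  refine bsAt_le_of_forall_exists_subset
    (fun ij => univ.filter fun c => c.1 = ij.1 ∧ x c ≠ P ij.2 c.2) ?_ fun B hB => ?_
  · rintro ⟨i, j⟩
    by_contra! h
    have hrow : (fun k => x (i, k)) = P j := funext fun k => by
      by_contra hk
      exact eq_empty_iff_forall_notMem.1 h (i, k) (mem_filter.2 ⟨mem_univ _, rfl, hk⟩)
    simp [(hf x).2 ⟨i, (hg _).2 ⟨j, hrow⟩⟩] at hx
  · obtain ⟨i, hi⟩ := (hf _).1 (by simpa [hx] using hB)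
    obtain ⟨j, hj⟩ := (hg _).1 hi
    refine ⟨(i, j), fun c hc => ?_⟩
    obtain ⟨rfl, hc⟩ := (mem_filter.1 hc).2
    by_contra hcB
    exact hc (by rw [← congrFun hj c.2]; simp [flipBlock, hcB])

lemma card_mul_card_le_bsAt_zero (hf : IsOrOfRows f g) (hg : ∀ y, g y = true ↔ ∃ j, y = P j)
    (hP : ∀ j, ∃ k, P j k = true) (hdisj : ∀ j j' k, P j k = true → P j' k = true → j = j') :
    Fintype.card R * Fintype.card J ≤ bsAt f fun _ => false := by
  have hzero : f (fun _ => false) = false := by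
    rw [Bool.eq_false_iff]
    intro h
    obtain ⟨i, hi⟩ := (hf _).1 h
    obtain ⟨j, hj⟩ := (hg _).1 hi
    obtain ⟨k, hk⟩ := hP j
    simp [← hj] at hk
  rw [← Fintype.card_prod]
  refine le_bsAt_of_pairwise_disjoint
    (fun ij : R × J => univ.filter fun c => c.1 = ij.1 ∧ P ij.2 c.2 = true) ?_ ?_
  · rintro ⟨i, j⟩ ⟨i', j'⟩ hne
    rw [disjoint_left]
    rintro ⟨a, c⟩ h h'
    simp only [mem_filter, mem_univ, true_and] at h h'
    exact hne (Prod.ext (h.1.symm.trans h'.1) (hdisj _ _ _ h.2 h'.2))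
  · rintro ⟨i, j⟩
    rw [hzero, ne_eq, Bool.not_eq_false]
    refine (hf _).2 ⟨i, (hg _).2 ⟨j, funext fun k => ?_⟩⟩
    by_cases hk : P j k = true <;> simp [flipBlock, hk]

theorem bs_eq_card_mul_card (hf : IsOrOfRows f g) (hg : ∀ y, g y = true ↔ ∃ j, y = P j)
    (hP : ∀ j, ∃ k, P j k = true) (hdisj : ∀ j j' k, P j k = true → P j' k = true → j = j')
    (hC : Fintype.card C ≤ Fintype.card R * Fintype.card J) :
    bs f = Fintype.card R * Fintype.card J := by
  refine le_antisymm (Finset.sup_le fun x _ => ?_)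
    ((card_mul_card_le_bsAt_zero hf hg hP hdisj).trans (le_sup (mem_univ _)))
  cases hx : f x
  · exact bsAt_le_card_mul_card_of_false hf hg hx
  · exact (bsAt_le_card_of_true hf hx).trans hC

end OrOfRows

def rubinsteinPattern (m : ℕ) (j : Fin m) (i : Fin (2 * m)) : Bool :=
  decide ((i : ℕ) = 2 * (j : ℕ) ∨ (i : ℕ) = 2 * (j : ℕ) + 1)

lemma rubinsteinPattern_exists_true {m : ℕ} (j : Fin m) : ∃ k, rubinsteinPattern m j k = true :=
  ⟨⟨2 * j, by omega⟩, by simp [rubinsteinPattern]⟩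

lemma rubinsteinPattern_eq_of_true {m : ℕ} {j j' : Fin m} {k : Fin (2 * m)}
    (h : rubinsteinPattern m j k = true) (h' : rubinsteinPattern m j' k = true) : j = j' := by
  simp only [rubinsteinPattern, decide_eq_true_eq] at h h'
  exact Fin.ext (by omega)

lemma three_le_hammingDist_rubinsteinPattern (m : ℕ) :
    Pairwise fun j j' => 3 ≤ hammingDist (rubinsteinPattern m j) (rubinsteinPattern m j') := by
  intro j j' hne
  have hne' : (j : ℕ) ≠ j' := Fin.val_ne_of_ne hne
  refine two_lt_card_iff.2 ⟨⟨2 * j, by omega⟩, ⟨2 * j + 1, by omega⟩, ⟨2 * j', by omega⟩,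
    ?_, ?_, ?_, ?_, ?_, ?_⟩ <;> simp [rubinsteinPattern, Fin.ext_iff] <;> omega

/-- Rubinstein's function `f : {0,1}^{4m²} → {0,1}`, the OR of `2m` disjoint copies of
`g : {0,1}^{2m} → {0,1}` where `g y = 1` iff `y` is 1 exactly on some pair
`{y_{2j-1}, y_{2j}}` (`j ∈ [m]`), has block sensitivity `bs(f) = 2m²`; consequently
`bs(f) = (1/2)·s(f)²`, stated over ℕ as `2·bs(f) = s(f)²`. -/
theorem rubinstein_bs (m : ℕ) (hm : 1 ≤ m)
    (g : (Fin (2*m) → Bool) → Bool)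
    (hg : ∀ y : Fin (2*m) → Bool, g y = true ↔
      ∃ j : Fin m, ∀ i : Fin (2*m),
        y i = decide ((i : ℕ) = 2*(j : ℕ) ∨ (i : ℕ) = 2*(j : ℕ)+1))
    (f : (Fin (2*m) × Fin (2*m) → Bool) → Bool)
    (hf : ∀ x : Fin (2*m) × Fin (2*m) → Bool,
      f x = true ↔ ∃ i : Fin (2*m), g (fun j => x (i, j)) = true) :
    bs f = 2*m^2 ∧ 2 * bs f = (sens f)^2 := by
  have hg' : ∀ y, g y = true ↔ ∃ j, y = rubinsteinPattern m j := fun y => by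
    simp only [hg y, funext_iff, rubinsteinPattern]
  have : Nonempty (Fin m) := ⟨⟨0, hm⟩⟩
  have : Nonempty (Fin (2 * m)) := ⟨⟨0, by omega⟩⟩
  have hbs : bs f = 2 * m ^ 2 := by
    rw [bs_eq_card_mul_card hf hg' rubinsteinPattern_exists_true
      (fun _ _ _ => rubinsteinPattern_eq_of_true) (by simp only [Fintype.card_fin]; nlinarith)]
    simp only [Fintype.card_fin]
    ring
  have hsens : sens f = 2 * m := by
    simpa using sens_eq_card hf hg' (three_le_hammingDist_rubinsteinPattern m)
      rubinsteinPattern_exists_true le_rfl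
  exact ⟨hbs, by rw [hbs, hsens]; ring⟩
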